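/- Let P ⊆ ℝ² be a set of 6 points containing the four vertices of a square, its center, and any sixth point. Then P determines at least three distinct angle values in (0,π). (This is the key uniqueness step showing P(2) = 5 is attained only by the square with center.) -/

import Mathlib

/-!
Equal sides put `b` and `d` on the perpendicular bisector of `ac`, at equal distance from its
midpoint `m`; in the plane this forces `m` to be the midpoint of `bd` too, and equal diagonals
make `abcd` a square with centre `m`. It determines `π / 4 = ∠ m a b` and `π / 2 = ∠ a m b`.
If a further point `q` lies on the diagonal `ac` (say), the triangle `m b q` has a right angle at
`m`, so its angle at `b` is acute, and it is `π / 4` only if `|mq| = |mb|`, i.e. `q ∈ {a, c}`.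
Otherwise `∠ a m q` and `∠ q m c` are supplementary, lie in `(0, π)`, differ from `π / 2`, and at
most one of them is `π / 4`.
-/

open EuclideanGeometry

noncomputable section

abbrev Pt : Type := EuclideanSpace ℝ (Fin 2)

/-- The point (x, y) in the Euclidean plane. -/
def pt (x y : ℝ) : Pt := (WithLp.equiv 2 (Fin 2 → ℝ)).symm ![x, y]

/-- The set of distinct angle values in (0, π) determined by a planar point set. -/
def angleSet (P : Set Pt) : Set ℝ :=
  {θ : ℝ | θ ∈ Set.Ioo 0 Real.pi ∧
    ∃ x ∈ P, ∃ y ∈ P, ∃ z ∈ P, x ≠ y ∧ y ≠ z ∧ x ≠ z ∧ ∠ x y z = θ}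

open Real Set
open scoped RealInnerProductSpace EuclideanSpace

section Euclidean

variable {V P : Type*} [NormedAddCommGroup V] [InnerProductSpace ℝ V] [MetricSpace P]
  [NormedAddTorsor V P]

theorem angle_eq_pi_div_two_of_angle_eq_zero_or_pi {a b m q : P} (h : ∠ a m b = π / 2)
    (hq : ∠ a m q = 0 ∨ ∠ a m q = π) : ∠ q m b = π / 2 := by
  obtain ⟨r, hr⟩ : ∃ r : ℝ, q -ᵥ m = r • (a -ᵥ m) := by
    rcases hq with hq | hq
    · obtain ⟨-, r, -, hr⟩ := InnerProductGeometry.angle_eq_zero_iff.1 hq; exact ⟨r, hr⟩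
    · obtain ⟨-, r, -, hr⟩ := InnerProductGeometry.angle_eq_pi_iff.1 hq; exact ⟨r, hr⟩
  rw [angle, ← InnerProductGeometry.inner_eq_zero_iff_angle_eq_pi_div_two] at h ⊢
  rw [hr, real_inner_smul_left, h, mul_zero]

theorem vsub_midpoint_right_eq_neg (x z : P) :
    z -ᵥ midpoint ℝ x z = -(x -ᵥ midpoint ℝ x z) := by
  rw [right_vsub_midpoint, left_vsub_midpoint, ← smul_neg, neg_vsub_eq_vsub_rev]

theorem angle_eq_pi_div_four_of_angle_eq_pi_div_two_of_dist_eq {a m b : P}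
    (h : ∠ a m b = π / 2) (hd : dist m a = dist m b) (ha : a ≠ m) : ∠ m a b = π / 4 := by
  have hsum := angle_add_angle_add_angle_eq_pi b ha.symm
  rw [h, angle_comm b a m, ← angle_eq_angle_of_dist_eq hd] at hsum
  linarith

theorem angle_mem_Ioo_of_angle_eq_pi_div_two {x m q : P} (h : ∠ x m q = π / 2) (hx : x ≠ m)
    (hq : q ≠ m) (hd : dist m q ≠ dist m x) : ∠ m x q ∈ Ioo 0 (π / 2) ∧ ∠ m x q ≠ π / 4 := by
  rw [angle_comm] at h
  refine ⟨⟨angle_pos_of_angle_eq_pi_div_two h (.inl hq),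
    angle_lt_pi_div_two_of_angle_eq_pi_div_two h hx⟩, fun h4 => hd ?_⟩
  have hsum := angle_add_angle_add_angle_eq_pi q hx.symm
  rw [angle_comm, h, angle_comm q x m, h4] at hsum
  refine (dist_eq_of_angle_eq_angle_of_angle_ne_pi ?_ ?_).symm
  · rw [h4]; linarith
  · rw [angle_comm, h]; linarith [pi_pos]

variable [Fact (Module.finrank ℝ V = 2)]

theorem eq_or_eq_neg_of_inner_eq_zero_of_norm_eq {u v w : V} (hv : v ≠ 0)
    (hu : ⟪u, v⟫ = 0) (hw : ⟪w, v⟫ = 0) (h : ‖u‖ = ‖w‖) : u = w ∨ u = -w := by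
  rcases eq_or_ne w 0 with rfl | hw0
  · exact .inl (norm_eq_zero.1 (h.trans norm_zero))
  obtain ⟨t, rfl⟩ := Submodule.mem_span_singleton.1 <|
    Submodule.mem_span_singleton_of_inner_eq_zero_of_inner_eq_zero hv hw0
      (real_inner_comm u v ▸ hu) (real_inner_comm w v ▸ hw)
  rw [norm_smul, Real.norm_eq_abs, mul_eq_right₀ (norm_ne_zero_iff.2 hw0)] at h
  rcases abs_eq zero_le_one |>.1 h with rfl | rfl <;> simp

theorem midpoint_eq_midpoint_of_equilateral {a b c d : P} (hac : a ≠ c)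
    (hbd : b ≠ d) (hab : dist a b = dist b c) (hbc : dist b c = dist c d)
    (hcd : dist c d = dist d a) :
    midpoint ℝ b d = midpoint ℝ a c := by
  set m := midpoint ℝ a c
  have hb : ∠ b m a = π / 2 :=
    angle_left_midpoint_eq_pi_div_two_of_dist_eq (by rw [dist_comm b a, hab])
  have hd : ∠ d m a = π / 2 :=
    angle_left_midpoint_eq_pi_div_two_of_dist_eq (by rw [dist_comm d c, hcd])
  have hdist : dist b m = dist d m := by
    have hb' := dist_sq_add_dist_sq_eq_two_mul_dist_midpoint_sq_add_half_dist_sq b a c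
    have hd' := dist_sq_add_dist_sq_eq_two_mul_dist_midpoint_sq_add_half_dist_sq d a c
    rw [dist_comm d c, ← hcd, ← hbc, ← hab] at hd'
    rw [dist_comm b a, ← hab] at hb'
    have : dist b m ^ 2 = dist d m ^ 2 := by linarith
    exact (pow_left_inj₀ dist_nonneg dist_nonneg two_ne_zero).1 this
  have ham : a -ᵥ m ≠ 0 := vsub_ne_zero.2 fun h => hac ((left_eq_midpoint_iff ℝ).1 h)
  rcases eq_or_eq_neg_of_inner_eq_zero_of_norm_eq ham
      ((InnerProductGeometry.inner_eq_zero_iff_angle_eq_pi_div_two _ _).2 hd)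
      ((InnerProductGeometry.inner_eq_zero_iff_angle_eq_pi_div_two _ _).2 hb)
      (by rw [← dist_eq_norm_vsub, ← dist_eq_norm_vsub, hdist]) with h | h
  · exact absurd (vsub_left_cancel h) hbd.symm
  · rw [midpoint_eq_iff', Equiv.pointReflection_apply, eq_comm, eq_vadd_iff_vsub_eq, h,
      neg_vsub_eq_vsub_rev]

theorem angle_mem_Ioo_of_angle_eq_pi_div_two_of_ne {x y z m q : P} (hm : midpoint ℝ x z = m)
    (hxy : ∠ x m y = π / 2) (hd : dist m x = dist m y) (hy : y ≠ m) (hqy : ∠ q m y = π / 2)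
    (hqx : q ≠ x) (hqz : q ≠ z) (hqm : q ≠ m) :
    ∠ m y q ∈ Ioo 0 (π / 2) ∧ ∠ m y q ≠ π / 4 := by
  refine angle_mem_Ioo_of_angle_eq_pi_div_two (by rwa [angle_comm]) hy hqm fun hqd => ?_
  have hym : y -ᵥ m ≠ 0 := vsub_ne_zero.2 hy
  rw [angle, ← InnerProductGeometry.inner_eq_zero_iff_angle_eq_pi_div_two] at hxy hqy
  rcases eq_or_eq_neg_of_inner_eq_zero_of_norm_eq hym hqy hxy
      (by rw [← dist_eq_norm_vsub, ← dist_eq_norm_vsub, dist_comm, hqd, ← hd, dist_comm])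
    with h | h
  · exact hqx (vsub_left_cancel h)
  · subst hm
    exact hqz (vsub_left_cancel (h.trans (vsub_midpoint_right_eq_neg x z).symm))

end Euclidean

theorem Set.ncard_triple_le {α : Type*} (x y z : α) : ({x, y, z} : Set α).ncard ≤ 3 := by
  classical
  simpa [← Set.ncard_coe_finset] using Finset.card_le_three (a := x) (b := y) (c := z)

theorem angleSet_finite {S : Set Pt} (hS : S.Finite) : (angleSet S).Finite := by
  refine ((hS.prod (hS.prod hS)).image fun t => ∠ t.1 t.2.1 t.2.2).subset ?_
  rintro θ ⟨-, x, hx, y, hy, z, hz, -, -, -, rfl⟩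
  exact ⟨(x, y, z), ⟨hx, hy, hz⟩, rfl⟩

theorem angle_mem_angleSet {S : Set Pt} {x y z : Pt} (hx : x ∈ S) (hy : y ∈ S) (hz : z ∈ S)
    (hxy : x ≠ y) (hzy : z ≠ y) (h : ∠ x y z ∈ Ioo 0 π) : ∠ x y z ∈ angleSet S :=
  ⟨h, x, hx, y, hy, z, hz, hxy, hzy.symm,
    fun hxz => h.1.ne' (by subst hxz; exact angle_self_of_ne hxy), rfl⟩

theorem exists_mem_angleSet_ne_of_square {a b c d m q : Pt} (hmac : midpoint ℝ a c = m)
    (hmbd : midpoint ℝ b d = m) (hright : ∠ a m b = π / 2) (hdist : dist m a = dist m b)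
    (ham : a ≠ m) (hbm : b ≠ m) (hq : q ∉ ({a, b, c, d, m} : Set Pt)) :
    ∃ θ ∈ angleSet {a, b, c, d, m, q}, θ ≠ π / 4 ∧ θ ≠ π / 2 := by
  simp only [mem_insert_iff, mem_singleton_iff, not_or] at hq
  obtain ⟨hqa, hqb, hqc, hqd, hqm⟩ := hq
  by_cases hqmb : ∠ q m b = π / 2
  · obtain ⟨hI, h4⟩ :=
      angle_mem_Ioo_of_angle_eq_pi_div_two_of_ne hmac hright hdist hbm hqmb hqa hqc hqm
    exact ⟨_, angle_mem_angleSet (by simp) (by simp) (by simp) hbm.symm hqb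
      ⟨hI.1, hI.2.trans (by linarith [pi_pos])⟩, h4, hI.2.ne⟩
  by_cases hqma : ∠ q m a = π / 2
  · obtain ⟨hI, h4⟩ := angle_mem_Ioo_of_angle_eq_pi_div_two_of_ne hmbd
      (by rwa [angle_comm]) hdist.symm ham hqma hqb hqd hqm
    exact ⟨_, angle_mem_angleSet (by simp) (by simp) (by simp) ham.symm hqa
      ⟨hI.1, hI.2.trans (by linarith [pi_pos])⟩, h4, hI.2.ne⟩
  have hac : a ≠ c := fun h => ham (((left_eq_midpoint_iff ℝ).2 h).trans hmac)
  have hcm : c ≠ m := fun h => hac ((midpoint_eq_right_iff ℝ).1 (hmac.trans h.symm))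
  have hnot : ¬(∠ a m q = 0 ∨ ∠ a m q = π) := fun h =>
    hqmb (angle_eq_pi_div_two_of_angle_eq_zero_or_pi hright h)
  have hI : ∠ a m q ∈ Ioo 0 π := by
    rw [not_or] at hnot
    exact ⟨(angle_nonneg _ _ _).lt_of_ne (Ne.symm hnot.1), (angle_le_pi _ _ _).lt_of_ne hnot.2⟩
  have hsum : ∠ q m a + ∠ q m c = π :=
    angle_add_angle_eq_pi_of_angle_eq_pi q (hmac ▸ angle_midpoint_eq_pi a c hac)
  rw [angle_comm] at hsum
  by_cases h4 : ∠ a m q = π / 4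
  · refine ⟨∠ q m c, angle_mem_angleSet (by simp) (by simp) (by simp) hqm hcm ?_, ?_, ?_⟩
    · constructor <;> linarith [pi_pos]
    all_goals intro h; linarith [pi_pos]
  · exact ⟨_, angle_mem_angleSet (by simp) (by simp) (by simp) ham hqm hI, h4,
      fun h => hqma (by rwa [angle_comm])⟩

theorem three_le_ncard_angleSet_of_square {a b c d m q : Pt} (hmac : midpoint ℝ a c = m)
    (hmbd : midpoint ℝ b d = m) (hright : ∠ a m b = π / 2) (hdist : dist m a = dist m b)
    (ham : a ≠ m) (hbm : b ≠ m) (hq : q ∉ ({a, b, c, d, m} : Set Pt)) :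
    3 ≤ (angleSet {a, b, c, d, m, q}).ncard := by
  have h2 : π / 2 ∈ angleSet {a, b, c, d, m, q} := hright ▸
    angle_mem_angleSet (by simp) (by simp) (by simp) ham hbm
      (by rw [hright]; constructor <;> linarith [pi_pos])
  have hba : b ≠ a := fun h => by
    rw [h, angle_self_of_ne ham] at hright
    linarith [pi_pos]
  have hmab := angle_eq_pi_div_four_of_angle_eq_pi_div_two_of_dist_eq hright hdist ham
  have h4 : π / 4 ∈ angleSet {a, b, c, d, m, q} := hmab ▸
    angle_mem_angleSet (by simp) (by simp) (by simp) ham.symm hba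
      (by rw [hmab]; constructor <;> linarith [pi_pos])
  obtain ⟨θ, hθ, hθ4, hθ2⟩ := exists_mem_angleSet_ne_of_square hmac hmbd hright hdist ham hbm hq
  exact (Set.two_lt_ncard_iff (angleSet_finite (toFinite _))).2
    ⟨_, _, _, h4, h2, hθ, by linarith [pi_pos], hθ4.symm, hθ2.symm⟩

theorem stmt18_general (a b c d q : Pt)
    (hdist : ({a, b, c, d} : Set Pt).ncard = 4)
    (hs1 : dist a b = dist b c) (hs2 : dist b c = dist c d) (hs3 : dist c d = dist d a)
    (hdiag : dist a c = dist b d)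
    (hq : q ∉ ({a, b, c, d, midpoint ℝ a c} : Set Pt)) :
    3 ≤ (angleSet {a, b, c, d, midpoint ℝ a c, q}).ncard := by
  have hac : a ≠ c := by
    rintro rfl
    rw [Set.insert_eq_of_mem (by simp)] at hdist
    have := Set.ncard_triple_le b a d
    omega
  have hbd : b ≠ d := by
    rintro rfl
    rw [Set.insert_eq_of_mem (a := b) (s := {c, b}) (by simp)] at hdist
    have := Set.ncard_triple_le a c b
    omega
  have hmbd := midpoint_eq_midpoint_of_equilateral hac hbd hs1 hs2 hs3
  refine three_le_ncard_angleSet_of_square rfl hmbd ?_ ?_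
    (fun h => hac ((left_eq_midpoint_iff ℝ).1 h))
    (fun h => hbd ((left_eq_midpoint_iff ℝ).1 (h.trans hmbd.symm))) hq
  · rw [angle_comm]
    exact angle_left_midpoint_eq_pi_div_two_of_dist_eq (by rw [dist_comm, hs1])
  · rw [dist_midpoint_left, ← hmbd, dist_midpoint_left, hdiag]

theorem stmt18 (a b c d q : Pt)
    (hdist : ({a, b, c, d} : Set Pt).ncard = 4)
    (hcol : ¬ Collinear ℝ ({a, b, c} : Set Pt))
    (hs1 : dist a b = dist b c) (hs2 : dist b c = dist c d) (hs3 : dist c d = dist d a)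
    (hdiag : dist a c = dist b d)
    (hq : q ∉ ({a, b, c, d, midpoint ℝ a c} : Set Pt)) :
    3 ≤ (angleSet {a, b, c, d, midpoint ℝ a c, q}).ncard :=
  stmt18_general a b c d q hdist hs1 hs2 hs3 hdiag hq
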